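/- Let μ > 0, 0 < d < 1/2, r ∈ ℝ, and consider minimizing h(w, z) = (1/2)(w − r)² + μz + d(w²/z − w²) over w ∈ ℝ, z ∈ [0,1] (with conventions 0²/0 = 0 and w²/0 = +∞ for w ≠ 0). Define z*(r) = 0 if |r| ≤ 2√(μd); z*(r) = (|r|√(d/μ) − 2d)/(1 − 2d) if 2√(μd) ≤ |r| ≤ √(μ/d); and z*(r) = 1 if |r| ≥ √(μ/d); and define w*(r) = 0 if |r| ≤ 2√(μd); w*(r) = sign(r)·√(μ/d)·z*(r) if 2√(μd) ≤ |r| ≤ √(μ/d); and w*(r) = r if |r| ≥ √(μ/d). Then (w*(r), z*(r)) attains the minimum of h over ℝ × [0,1], and h(w*(r), z*(r)) = φ̄(r; d). -/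

import Mathlib

/-- The perspective-relaxation loss φ̄(r; d) for parameters μ > 0, d ∈ (0,1/2). -/
noncomputable def phiBar (mu d r : ℝ) : ℝ :=
  if |r| ≤ 2 * Real.sqrt (mu * d) then (1/2) * r^2
  else if |r| < Real.sqrt (mu / d) then
    (-(d * r^2) + 2 * Real.sqrt (mu * d) * |r| - 2 * mu * d) / (1 - 2*d)
  else mu

/-- The objective h(w,z) = (1/2)(w−r)² + μz + d(w²/z − w²), EReal-valued,
with the conventions h(0,0) = (1/2)r² and h(w,0) = +∞ for w ≠ 0. -/
noncomputable def hObj (mu d r w z : ℝ) : EReal :=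
  if z = 0 then (if w = 0 then (((1/2) * (w - r)^2 : ℝ) : EReal) else ⊤)
  else (((1/2) * (w - r)^2 + mu * z + d * (w^2 / z - w^2) : ℝ) : EReal)

/-- The optimal z*(r). -/
noncomputable def zstar (mu d r : ℝ) : ℝ :=
  if |r| ≤ 2 * Real.sqrt (mu * d) then 0
  else if |r| ≤ Real.sqrt (mu / d) then
    (|r| * Real.sqrt (d / mu) - 2*d) / (1 - 2*d)
  else 1

/-- The optimal w*(r). -/
noncomputable def wstar (mu d r : ℝ) : ℝ :=
  if |r| ≤ 2 * Real.sqrt (mu * d) then 0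
  else if |r| ≤ Real.sqrt (mu / d) then
    Real.sign r * Real.sqrt (mu / d) * zstar mu d r
  else r

/-!
For fixed `z ∈ (0, 1]`, `h(·, z)` is a quadratic in `w`: with `t = 2d(1 - z) + z ∈ [2d, 1]`
it equals `g(z) + (t w - z r)² / (2 z t)`, where `g(z) = μ z + d r² (1 - z) / t` is
`reducedObj`, so its minimum over `w` is `g(z)`, attained at `w = z r / t`. In the variable
`t`, `(1 - 2d) g = μ t + d r² / t - d r² - 2 μ d`, and `μ t + d r² / t` is minimized over
`[2d, 1]` at the AM-GM point `t = |r| √(d / μ)` clipped to that interval. The three clipping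
regimes are the three branches of `φ̄`, `z*` and `w*`.
-/

noncomputable def reducedObj (mu d r z : ℝ) : ℝ :=
  mu * z + d * r ^ 2 * (1 - z) / (2 * d * (1 - z) + z)

theorem Real.sign_mul_abs (r : ℝ) : Real.sign r * |r| = r := by
  rcases lt_trichotomy r 0 with h | rfl | h
  · rw [Real.sign_of_neg h, abs_of_neg h]; ring
  · simp
  · rw [Real.sign_of_pos h, abs_of_pos h, one_mul]

section

variable {mu d r w z t : ℝ}

theorem two_mul_mul_one_sub_add_pos (hd : 0 < d) (hz0 : 0 ≤ z) (hz1 : z ≤ 1) :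
    0 < 2 * d * (1 - z) + z := by
  rcases hz0.eq_or_lt with rfl | hz
  · simpa using hd
  · nlinarith

theorem objective_eq_reducedObj_add_sq (hz : z ≠ 0) (ht : 2 * d * (1 - z) + z = t)
    (ht0 : t ≠ 0) :
    (1/2) * (w - r)^2 + mu * z + d * (w^2 / z - w^2) =
      reducedObj mu d r z + (t * w - z * r) ^ 2 / (2 * z * t) := by
  subst ht
  unfold reducedObj
  field_simp
  ring

theorem reducedObj_le_hObj (hd : 0 < d) (hz0 : 0 ≤ z) (hz1 : z ≤ 1) :
    (reducedObj mu d r z : EReal) ≤ hObj mu d r w z := by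
  rcases hz0.eq_or_lt with rfl | hz
  · by_cases hw : w = 0
    · have : reducedObj mu d r 0 = (1/2) * (w - r)^2 := by
        simp only [reducedObj, hw]; field_simp; ring
      simp [hObj, hw, this]
    · simp [hObj, hw]
  · have ht := two_mul_mul_one_sub_add_pos hd hz0 hz1
    rw [hObj, if_neg hz.ne', objective_eq_reducedObj_add_sq hz.ne' rfl ht.ne',
      EReal.coe_le_coe_iff]
    exact le_add_of_nonneg_right (by positivity)

theorem hObj_eq_reducedObj (hz : z ≠ 0) (ht : 2 * d * (1 - z) + z = t) (ht0 : t ≠ 0)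
    (hw : t * w = z * r) : hObj mu d r w z = reducedObj mu d r z := by
  rw [hObj, if_neg hz, objective_eq_reducedObj_add_sq hz ht ht0, hw]
  simp

theorem one_sub_two_mul_mul_reducedObj (ht : 2 * d * (1 - z) + z = t) (ht0 : t ≠ 0) :
    (1 - 2 * d) * reducedObj mu d r z = mu * t + d * r ^ 2 / t - d * r ^ 2 - 2 * mu * d := by
  subst ht
  unfold reducedObj
  field_simp
  ring

theorem two_mul_sqrt_mul_abs_le (hmu : 0 < mu) (hd : 0 ≤ d) (ht : 0 < t) :
    2 * √(mu * d) * |r| ≤ mu * t + d * r ^ 2 / t := by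
  have hs : √(mu * d) ^ 2 = mu * d := Real.sq_sqrt (by positivity)
  rw [← sub_nonneg, show mu * t + d * r ^ 2 / t - 2 * √(mu * d) * |r|
      = (mu * t - √(mu * d) * |r|) ^ 2 / (mu * t) by
    field_simp; linear_combination (-|r| ^ 2) * hs - mu * d * sq_abs r]
  positivity

theorem phiBar_le_reducedObj (hmu : 0 < mu) (hd0 : 0 < d) (hd : d < 1/2) (hz0 : 0 ≤ z)
    (hz1 : z ≤ 1) : phiBar mu d r ≤ reducedObj mu d r z := by
  set t := 2 * d * (1 - z) + z with ht
  have ht0 : 0 < t := two_mul_mul_one_sub_add_pos hd0 hz0 hz1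
  have h12 : 0 < 1 - 2 * d := by linarith
  have h2d : 0 ≤ t - 2 * d := by nlinarith
  have ht1 : 0 ≤ 1 - t := by nlinarith
  refine le_of_mul_le_mul_left ?_ h12
  rw [one_sub_two_mul_mul_reducedObj ht.symm ht0.ne', phiBar]
  split_ifs with hsmall hmid
  · have hr : r ^ 2 ≤ 4 * (mu * d) := by
      rw [← sq_abs, ← Real.sq_sqrt (by positivity : 0 ≤ mu * d)]
      nlinarith [abs_nonneg r]
    have hprod : 0 ≤ (t - 2 * d) * (mu * t - r ^ 2 / 2) / t := by
      apply div_nonneg _ ht0.le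
      exact mul_nonneg h2d (by nlinarith)
    have hid : (t - 2 * d) * (mu * t - r ^ 2 / 2) / t
        = mu * t + d * r ^ 2 / t - 2 * mu * d - r ^ 2 / 2 := by
      field_simp; ring
    linarith
  · rw [mul_div_cancel₀ _ h12.ne']
    linarith [two_mul_sqrt_mul_abs_le (r := r) hmu hd0.le ht0]
  · have hr : mu ≤ d * r ^ 2 := by
      have := (Real.sqrt_le_sqrt_iff (x := mu / d) (sq_nonneg r)).1
        (by rw [Real.sqrt_sq_eq_abs]; exact not_lt.1 hmid)
      rwa [div_le_iff₀' hd0] at this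
    have hprod : 0 ≤ (1 - t) * (d * r ^ 2 - mu * t) / t := by
      apply div_nonneg _ ht0.le
      exact mul_nonneg ht1 (by nlinarith)
    have hid : (1 - t) * (d * r ^ 2 - mu * t) / t
        = mu * t + d * r ^ 2 / t - mu - d * r ^ 2 := by
      field_simp; ring
    linarith

end

section
variable {a b r z : ℝ}

theorem hObj_eq_of_two_mul_lt_abs (ha : 0 < a) (hb : 0 < b) (hb2 : b ^ 2 < 1/2)
    (hlo : 2 * (a * b) < |r|) (hz : z = (|r| * (b / a) - 2 * b ^ 2) / (1 - 2 * b ^ 2)) :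
    hObj (a ^ 2) (b ^ 2) r (Real.sign r * (a / b) * z) z =
      (((-(b ^ 2 * r ^ 2) + 2 * (a * b) * |r| - 2 * a ^ 2 * b ^ 2) / (1 - 2 * b ^ 2) : ℝ) :
        EReal) := by
  have hr : 0 < |r| := by nlinarith
  have h12 : 0 < 1 - 2 * b ^ 2 := by linarith
  set t := |r| * (b / a) with ht
  have ht0 : 0 < t := by positivity
  have hz0 : 0 < z := by
    rw [hz]
    apply div_pos _ h12
    rw [ht, sub_pos, mul_div_assoc', lt_div_iff₀ ha]
    nlinarith
  have hzt : 2 * b ^ 2 * (1 - z) + z = t := by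
    rw [hz]; field_simp; ring
  have hw : t * (Real.sign r * (a / b) * z) = z * r := by
    conv_rhs => rw [← Real.sign_mul_abs r]
    rw [ht]; field_simp
  rw [hObj_eq_reducedObj hz0.ne' hzt ht0.ne' hw, EReal.coe_eq_coe_iff, eq_div_iff h12.ne',
    mul_comm, one_sub_two_mul_mul_reducedObj hzt ht0.ne', ht, ← sq_abs r]
  field_simp
  ring

end

theorem hObj_wstar_zstar {mu d r : ℝ} (hmu : 0 < mu) (hd0 : 0 < d) (hd : d < 1/2) :
    hObj mu d r (wstar mu d r) (zstar mu d r) = phiBar mu d r := by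
  -- writing `μ = a²`, `d = b²` makes every square root rational in `a`, `b`
  obtain ⟨a, ha, rfl⟩ : ∃ a, 0 < a ∧ a ^ 2 = mu :=
    ⟨√mu, Real.sqrt_pos.2 hmu, Real.sq_sqrt hmu.le⟩
  obtain ⟨b, hb, rfl⟩ : ∃ b, 0 < b ∧ b ^ 2 = d :=
    ⟨√d, Real.sqrt_pos.2 hd0, Real.sq_sqrt hd0.le⟩
  have hab : √(a ^ 2 * b ^ 2) = a * b := by rw [← mul_pow, Real.sqrt_sq (by positivity)]
  have hadb : √(a ^ 2 / b ^ 2) = a / b := by rw [← div_pow, Real.sqrt_sq (by positivity)]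
  have hbda : √(b ^ 2 / a ^ 2) = b / a := by rw [← div_pow, Real.sqrt_sq (by positivity)]
  simp only [wstar, zstar, phiBar, hab, hadb, hbda]
  split_ifs with hlo hhi hhi' hhi'
  · simp [hObj]
  · exact hObj_eq_of_two_mul_lt_abs ha hb hd (not_le.1 hlo) rfl
  · have hr : |r| = a / b := le_antisymm hhi (not_lt.1 hhi')
    rw [hObj_eq_of_two_mul_lt_abs ha hb hd (not_le.1 hlo) rfl, hr, EReal.coe_eq_coe_iff,
      div_eq_iff (by linarith), ← sq_abs r, hr]
    field_simp
    ring
  · exact absurd hhi'.le hhi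
  · simp [hObj]

theorem stmt_13 (mu d r : ℝ) (hmu : 0 < mu) (hd0 : 0 < d) (hd : d < 1/2) :
    (∀ w z : ℝ, 0 ≤ z → z ≤ 1 →
      hObj mu d r (wstar mu d r) (zstar mu d r) ≤ hObj mu d r w z) ∧
    hObj mu d r (wstar mu d r) (zstar mu d r) = ((phiBar mu d r : ℝ) : EReal) := by
  have hval := hObj_wstar_zstar (r := r) hmu hd0 hd
  refine ⟨fun w z hz0 hz1 => ?_, hval⟩
  rw [hval]
  exact (EReal.coe_le_coe_iff.2 (phiBar_le_reducedObj hmu hd0 hd hz0 hz1)).trans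
    (reducedObj_le_hObj hd0 hz0 hz1)
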